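/- Let f be differentiable on an open interval containing [a,b] (a < b) with f' integrable, q > 1 with 1/p + 1/q = 1, and suppose |f'|^q is quasi-convex on [a,b]. Then the trapezoid inequality holds: |(f(a) + f(b))/2 − (1/(b−a)) ∫_a^b f(x) dx| ≤ ((b−a)/(4(p+1)^(1/p))) [ (max{|f'((a+b)/2)|^q, |f'(a)|^q})^(1/q) + (max{|f'((a+b)/2)|^q, |f'(b)|^q})^(1/q) ]. -/

import Mathlib

/-!
Integration by parts with the kernel `x - (a + b) / 2` gives
`(f a + f b) / 2 - (1 / (b - a)) ∫ f = (1 / (b - a)) ∫ (x - (a + b) / 2) f' x`.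
Quasi-convexity bounds `|f'|` on each half of `[a, b]` by its values at the ends of that half,
and integrating `|x - (a + b) / 2|` over the halves gives the bound `(b - a) / 8 * (A + B)`,
where `A` and `B` bound `|f'|` on the left and right halves.
This already implies the claim, because `(p + 1) ^ (1 / p) ≤ 2` for `p ≥ 1` by Bernoulli's inequality.
-/

open MeasureTheory Set intervalIntegral

theorem QuasiconvexOn.le_max_of_mem_segment {𝕜 E β : Type*} [Semiring 𝕜] [PartialOrder 𝕜]
    [AddCommMonoid E] [LinearOrder β] [SMul 𝕜 E] {s : Set E} {f : E → β}
    (hf : QuasiconvexOn 𝕜 s f) {x y z : E} (hx : x ∈ s) (hy : y ∈ s) (hz : z ∈ segment 𝕜 x y) :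
    f z ≤ max (f x) (f y) :=
  ((hf _).segment_subset ⟨hx, le_max_left _ _⟩ ⟨hy, le_max_right _ _⟩ hz).2

theorem add_one_rpow_one_div_le_two {p : ℝ} (hp : 1 ≤ p) : (p + 1) ^ (1 / p) ≤ 2 := by
  have hbernoulli : p + 1 ≤ 2 ^ p := by
    have := one_add_mul_self_le_rpow_one_add (s := 1) (by norm_num) hp
    norm_num at this; linarith
  rw [one_div, Real.rpow_inv_le_iff_of_pos (by linarith) zero_le_two (by linarith)]
  exact hbernoulli

theorem integral_abs_sub_left {u v : ℝ} (huv : u ≤ v) :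
    ∫ x in u..v, |x - u| = (v - u) ^ 2 / 2 := by
  rw [integral_congr (g := fun x => x - u) fun x hx => abs_of_nonneg (by
      rw [uIcc_of_le huv] at hx; linarith [hx.1]),
    integral_comp_sub_right (fun x => x), integral_id]
  ring

theorem integral_abs_sub_right {u v : ℝ} (huv : u ≤ v) :
    ∫ x in u..v, |x - v| = (v - u) ^ 2 / 2 := by
  rw [integral_congr (g := fun x => v - x) fun x hx => by
      rw [uIcc_of_le huv] at hx; rw [abs_sub_comm, abs_of_nonneg (by linarith [hx.2])],
    integral_comp_sub_left (fun x => x), integral_id]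
  ring

theorem integral_abs_sub_mul_le {g : ℝ → ℝ} {u v t K : ℝ} (huv : u ≤ v)
    (hg : IntervalIntegrable g volume u v) (hK : ∀ x ∈ Icc u v, |g x| ≤ K) :
    ∫ x in u..v, |(x - t) * g x| ≤ K * ∫ x in u..v, |x - t| := by
  rw [← intervalIntegral.integral_const_mul]
  refine integral_mono_on huv (hg.continuousOn_mul (by fun_prop)).abs
    (Continuous.intervalIntegrable (by fun_prop) _ _) fun x hx => ?_
  rw [abs_mul, mul_comm K]
  exact mul_le_mul_of_nonneg_left (hK x hx) (abs_nonneg _)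


theorem trapezoid_sub_average_eq {f f' : ℝ → ℝ} {a b : ℝ} (hab : a ≠ b)
    (hf : ∀ x ∈ uIcc a b, HasDerivAt f (f' x) x) (hf' : IntervalIntegrable f' volume a b) :
    (f a + f b) / 2 - (1 / (b - a)) * ∫ x in a..b, f x
      = (1 / (b - a)) * ∫ x in a..b, (x - (a + b) / 2) * f' x := by
  have hparts := integral_mul_deriv_eq_deriv_mul (u := fun x => x - (a + b) / 2)
    (fun x _ => (hasDerivAt_id x).sub_const _) hf intervalIntegrable_const hf'
  simp only [one_mul] at hparts
  rw [hparts]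
  have : b - a ≠ 0 := sub_ne_zero.2 hab.symm
  field_simp
  ring

theorem abs_integral_sub_midpoint_mul_le {g : ℝ → ℝ} {a b A B : ℝ} (hab : a ≤ b)
    (hg : IntervalIntegrable g volume a b)
    (hA : ∀ x ∈ Icc a ((a + b) / 2), |g x| ≤ A) (hB : ∀ x ∈ Icc ((a + b) / 2) b, |g x| ≤ B) :
    |∫ x in a..b, (x - (a + b) / 2) * g x| ≤ (b - a) ^ 2 / 8 * (A + B) := by
  set m := (a + b) / 2 with hm
  have ham : a ≤ m := by linarith
  have hmb : m ≤ b := by linarith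
  have hm_mem : m ∈ uIcc a b := by rw [uIcc_of_le hab]; exact ⟨ham, hmb⟩
  have hint : IntervalIntegrable (fun x => |(x - m) * g x|) volume a b :=
    (hg.continuousOn_mul (by fun_prop)).abs
  calc |∫ x in a..b, (x - m) * g x|
      ≤ ∫ x in a..b, |(x - m) * g x| := abs_integral_le_integral_abs hab
    _ = (∫ x in a..m, |(x - m) * g x|) + ∫ x in m..b, |(x - m) * g x| :=
        (integral_add_adjacent_intervals (hint.mono_set (uIcc_subset_uIcc_left hm_mem))
          (hint.mono_set (uIcc_subset_uIcc_right hm_mem))).symm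
    _ ≤ (A * ∫ x in a..m, |x - m|) + B * ∫ x in m..b, |x - m| :=
        add_le_add (integral_abs_sub_mul_le ham (hg.mono_set (uIcc_subset_uIcc_left hm_mem)) hA)
          (integral_abs_sub_mul_le hmb (hg.mono_set (uIcc_subset_uIcc_right hm_mem)) hB)
    _ = (b - a) ^ 2 / 8 * (A + B) := by
        rw [integral_abs_sub_right ham, integral_abs_sub_left hmb]
        ring

theorem abs_trapezoid_sub_average_le {f f' : ℝ → ℝ} {a b A B : ℝ} (hab : a < b)
    (hf : ∀ x ∈ uIcc a b, HasDerivAt f (f' x) x) (hf' : IntervalIntegrable f' volume a b)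
    (hA : ∀ x ∈ Icc a ((a + b) / 2), |f' x| ≤ A) (hB : ∀ x ∈ Icc ((a + b) / 2) b, |f' x| ≤ B) :
    |(f a + f b) / 2 - (1 / (b - a)) * ∫ x in a..b, f x| ≤ (b - a) / 8 * (A + B) := by
  have hba : 0 < b - a := sub_pos.2 hab
  rw [trapezoid_sub_average_eq hab.ne hf hf', abs_mul, abs_of_pos (one_div_pos.2 hba)]
  calc 1 / (b - a) * |∫ x in a..b, (x - (a + b) / 2) * f' x|
      ≤ 1 / (b - a) * ((b - a) ^ 2 / 8 * (A + B)) := by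
        gcongr; exact abs_integral_sub_midpoint_mul_le hab.le hf' hA hB
    _ = (b - a) / 8 * (A + B) := by field_simp

theorem stmt_11 (f f' : ℝ → ℝ) (a b p q c d : ℝ) (hab : a < b)
    (hq : 1 < q) (hpq : 1 / p + 1 / q = 1)
    (hca : c < a) (hbd : b < d)
    (hf : ∀ x ∈ Set.Ioo c d, HasDerivAt f (f' x) x)
    (hint : IntervalIntegrable f' volume a b)
    (hqc : ∀ x ∈ Set.Icc a b, ∀ y ∈ Set.Icc a b, ∀ α ∈ Set.Icc (0:ℝ) 1,
      |f' (α * x + (1 - α) * y)| ^ q ≤ max (|f' x| ^ q) (|f' y| ^ q)) :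
    |(f a + f b) / 2 - (1 / (b - a)) * ∫ x in a..b, f x|
      ≤ (b - a) / (4 * (p + 1) ^ (1 / p)) *
          ((max (|f' ((a + b) / 2)| ^ q) (|f' a| ^ q)) ^ (1 / q)
            + (max (|f' ((a + b) / 2)| ^ q) (|f' b| ^ q)) ^ (1 / q)) := by
  have hp : 1 < p :=
    (Real.holderConjugate_iff.2 ⟨hq, by simpa [one_div, add_comm] using hpq⟩).symm.lt
  have hquasi : QuasiconvexOn ℝ (Icc a b) (fun x => |f' x| ^ q) :=
    quasiconvexOn_iff_le_max.2 ⟨convex_Icc a b, fun x hx y hy α β hα hβ hαβ => by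
      simpa [← hαβ] using hqc x hx y hy α ⟨hα, by linarith⟩⟩
  have habs_le {x y : ℝ} (hx : x ∈ Icc a b) (hy : y ∈ Icc a b) (z : ℝ) (hz : z ∈ uIcc x y) :
      |f' z| ≤ (max (|f' x| ^ q) (|f' y| ^ q)) ^ (1 / q) := by
    rw [one_div, Real.le_rpow_inv_iff_of_pos (abs_nonneg _) (by positivity) (by linarith)]
    exact hquasi.le_max_of_mem_segment hx hy (by rwa [segment_eq_uIcc])
  have hm : (a + b) / 2 ∈ Icc a b := ⟨by linarith, by linarith⟩
  have hf_ab : ∀ x ∈ uIcc a b, HasDerivAt f (f' x) x := fun x hx => by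
    rw [uIcc_of_le hab.le] at hx
    exact hf x ⟨hca.trans_le hx.1, hx.2.trans_lt hbd⟩
  calc _ ≤ (b - a) / 8 * _ := abs_trapezoid_sub_average_le hab hf_ab hint
        (fun x hx => habs_le hm (left_mem_Icc.2 hab.le) x (by rwa [uIcc_of_ge hm.1]))
        (fun x hx => habs_le hm (right_mem_Icc.2 hab.le) x (by rwa [uIcc_of_le hm.2]))
    _ = (b - a) / (4 * 2) * _ := by rw [show (4 * 2 : ℝ) = 8 by norm_num]
    _ ≤ _ := by
        gcongr
        exact add_one_rpow_one_div_le_two hp.le
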